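/- Let S₁, S₂ ⊆ {0,1}^d be strongly base orderable matroids and S := S₁ ∩ S₂. Then [S₁^n] ∩ [S₂^n] = [S^n], i.e., a 0-1 matrix is simultaneously equivalent to a matrix with all columns in S₁ and to a matrix with all columns in S₂ if and only if it is equivalent to a matrix with all columns in S₁ ∩ S₂. -/

import Mathlib

def Eqv {d n : ℕ} (x y : Fin d → Fin n → ℕ) : Prop :=
  ∀ i : Fin d, ∃ σ : Equiv.Perm (Fin n), ∀ j, x i j = y i (σ j)

/-- `[Sⁿ]`: the set of matrices equivalent to some matrix all of whose columns lie in `S`. -/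
def SBracket {d : ℕ} (n : ℕ) (S : Set (Fin d → ℕ)) : Set (Fin d → Fin n → ℕ) :=
  {x | ∃ y : Fin d → Fin n → ℕ, (∀ j, (fun i => y i j) ∈ S) ∧ Eqv x y}

def IsMatroid {E : Type*} [Fintype E] [DecidableEq E] (S : Set (E → ℕ)) : Prop :=
  (∀ z ∈ S, ∀ i, z i ≤ 1) ∧
  ((fun _ => 0) ∈ S) ∧
  (∀ x ∈ S, ∀ y : E → ℕ, (∀ i, y i ≤ x i) → y ∈ S) ∧
  (∀ x ∈ S, ∀ y ∈ S, (∑ i, y i) < (∑ i, x i) →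
    ∃ i, x i = 1 ∧ y i = 0 ∧ Function.update y i 1 ∈ S)

def IsBaseV {E : Type*} (S : Set (E → ℕ)) (z : E → ℕ) : Prop :=
  z ∈ S ∧ ∀ w ∈ S, (∀ i, z i ≤ w i) → w = z

noncomputable def indFun {E : Type*} (A : Set E) : E → ℕ := A.indicator 1

def IsSBO {E : Type*} (S : Set (E → ℕ)) : Prop :=
  ∀ z w : E → ℕ, IsBaseV S z → IsBaseV S w →
    ∃ π : E → E, Set.BijOn π {i | z i = 1} {i | w i = 1} ∧
      ∀ I ⊆ {i | z i = 1}, IsBaseV S (indFun (π '' I ∪ ({i | z i = 1} \ I)))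


/-- The `n`-union of a set `T` of 0-1 vectors on a ground set `E`: sums of `n` members
of `T` with pairwise disjoint supports. -/
def NUnion {E : Type*} [Fintype E] (n : ℕ) (T : Set (E → ℕ)) : Set (E → ℕ) :=
  {x | ∃ f : Fin n → E → ℕ, (∀ k, f k ∈ T) ∧
    (∀ k l, k ≠ l → ∀ i, f k i = 0 ∨ f l i = 0) ∧ ∀ i, x i = ∑ k, f k i}

/-!
Replace every element `i` of the ground set `[d]` by `n` parallel copies `(i, j)`. A 0-1 matrix
`x` lies in `[Sⁿ]` exactly when, read as a 0-1 function on `[d] × [n]`, it is a disjoint union of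
`n` independent sets of the lifted matroid `↑ₙ S`: the rows of `x` and of a matrix with columns in
`S` are permutations of each other precisely when they have the same number of ones. The lift
commutes with intersection and preserves strong base orderability (a base of `↑ₙ S` is a base of
`S` with a chosen copy of each element), so the Davies–McDiarmid theorem on `[d] × [n]` gives the
claim.
-/

open Function Set

section Matroid

variable {E : Type*}

lemma indFun_setOf_eq_one {u : E → ℕ} (hu : ∀ i, u i ≤ 1) : indFun {i | u i = 1} = u := by
  funext i
  have := hu i
  by_cases h : u i = 1
  · simp [indFun, h]
  · simp [indFun, h]; omega

variable [Fintype E]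

lemma sum_indFun (A : Set E) : ∑ i, indFun A i = A.ncard := by
  classical
  simp [indFun, Set.indicator_apply, Finset.sum_boole, Set.ncard_eq_toFinset_card']

variable [DecidableEq E] {S : Set (E → ℕ)}

lemma IsMatroid.not_isBaseV_of_sum_lt (hM : IsMatroid S) {x y : E → ℕ} (hx : x ∈ S) (hy : y ∈ S)
    (hlt : ∑ i, y i < ∑ i, x i) : ¬ IsBaseV S y := by
  intro hyB
  obtain ⟨i, -, hyi, hupd⟩ := hM.2.2.2 x hx y hy hlt
  have := congrFun (hyB.2 _ hupd (le_update_iff.2 ⟨by omega, fun _ _ => le_rfl⟩)) i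
  simp [hyi] at this

lemma IsMatroid.sum_eq_of_isBaseV (hM : IsMatroid S) {x y : E → ℕ} (hx : IsBaseV S x)
    (hy : IsBaseV S y) : ∑ i, x i = ∑ i, y i :=
  le_antisymm (not_lt.1 fun h => hM.not_isBaseV_of_sum_lt hx.1 hy.1 h hy)
    (not_lt.1 fun h => hM.not_isBaseV_of_sum_lt hy.1 hx.1 h hx)

lemma IsMatroid.disjoint_image_sdiff (hM : IsMatroid S) {u : E → ℕ} (hu : IsBaseV S u)
    {π : E → E} {I : Set E} (hπ : InjOn π I) (hI : I ⊆ {i | u i = 1})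
    (hB : IsBaseV S (indFun (π '' I ∪ ({i | u i = 1} \ I)))) :
    Disjoint (π '' I) ({i | u i = 1} \ I) := by
  have hu_card : ∑ i, u i = {i | u i = 1}.ncard := by
    rw [← sum_indFun, indFun_setOf_eq_one (hM.1 u hu.1)]
  -- all bases have the same size, while `|π '' I| + |{u = 1} \ I| = |{u = 1}|`
  have hcard := hM.sum_eq_of_isBaseV hB hu
  rw [sum_indFun, hu_card] at hcard
  rw [← ncard_union_eq_iff, hcard, hπ.ncard_image, ncard_sdiff hI]
  have := ncard_le_ncard hI
  omega

end Matroid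

section ZeroOne

variable {ι : Type*} [Fintype ι] {a b : ι → ℕ}

lemma card_eq_one_eq_sum (ha : ∀ j, a j ≤ 1) : Fintype.card {j // a j = 1} = ∑ j, a j := by
  rw [Fintype.card_subtype, Finset.card_filter]
  refine Finset.sum_congr rfl fun j _ => ?_
  have := ha j
  split_ifs <;> omega

lemma card_eq_zero_eq_card_sub_sum (ha : ∀ j, a j ≤ 1) :
    Fintype.card {j // a j = 0} = Fintype.card ι - ∑ j, a j := by
  rw [← card_eq_one_eq_sum ha, ← Fintype.card_subtype_compl]
  exact Fintype.card_congr (Equiv.subtypeEquivRight fun j => by have := ha j; omega)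

lemma exists_perm_of_sum_eq (ha : ∀ j, a j ≤ 1) (hb : ∀ j, b j ≤ 1) (h : ∑ j, a j = ∑ j, b j) :
    ∃ σ : Equiv.Perm ι, ∀ j, a j = b (σ j) := by
  have hfib : ∀ c, Fintype.card {j // a j = c} = Fintype.card {j // b j = c}
    | 0 => by rw [card_eq_zero_eq_card_sub_sum ha, card_eq_zero_eq_card_sub_sum hb, h]
    | 1 => by rw [card_eq_one_eq_sum ha, card_eq_one_eq_sum hb, h]
    | c + 2 => by
      rw [Fintype.card_eq_zero_iff.2 ⟨fun j => by have := ha j.1; have := j.2; omega⟩,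
        Fintype.card_eq_zero_iff.2 ⟨fun j => by have := hb j.1; have := j.2; omega⟩]
  exact ⟨Equiv.ofFiberEquiv fun c => Fintype.equivOfCardEq (hfib c),
    fun j => (Equiv.ofFiberEquiv_map _ j).symm⟩

end ZeroOne

section RowLift

variable {d n : ℕ} {S : Set (Fin d → ℕ)}

def rowSum (n : ℕ) {d : ℕ} (z : Fin d × Fin n → ℕ) : Fin d → ℕ := fun i => ∑ j, z (i, j)

/-- The lift `↑ₙ S`. -/
def rowLift (n : ℕ) {d : ℕ} (S : Set (Fin d → ℕ)) : Set (Fin d × Fin n → ℕ) :=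
  {z | (∀ p, z p ≤ 1) ∧ rowSum n z ∈ S}

lemma le_rowSum (z : Fin d × Fin n → ℕ) (i : Fin d) (j : Fin n) : z (i, j) ≤ rowSum n z i :=
  Finset.single_le_sum (f := fun j => z (i, j)) (fun _ _ => Nat.zero_le _) (Finset.mem_univ j)

lemma rowSum_mono {z w : Fin d × Fin n → ℕ} (h : ∀ p, z p ≤ w p) (i : Fin d) :
    rowSum n z i ≤ rowSum n w i :=
  Finset.sum_le_sum fun j _ => h (i, j)

lemma sum_rowSum (z : Fin d × Fin n → ℕ) : ∑ i, rowSum n z i = ∑ p, z p :=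
  (Fintype.sum_prod_type z).symm

lemma rowSum_update_of_eq_zero {z : Fin d × Fin n → ℕ} {i : Fin d} {j : Fin n}
    (hz : z (i, j) = 0) :
    rowSum n (update z (i, j) 1) = update (rowSum n z) i (rowSum n z i + 1) := by
  funext i'
  rcases eq_or_ne i' i with rfl | hi
  · change ∑ j', (update z (i', j) 1 ∘ Prod.mk i') j' = _
    rw [update_comp_eq_of_injective z (Prod.mk_right_injective i'), update_self,
      Finset.sum_update_of_mem (Finset.mem_univ j), rowSum,
      Finset.sum_eq_add_sum_sdiff_singleton_of_mem (Finset.mem_univ j)]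
    simp [hz, add_comm]
  · simp [rowSum, hi]

lemma exists_eq_one_of_rowSum_eq_one {z : Fin d × Fin n → ℕ} (hz : ∀ p, z p ≤ 1) {i : Fin d}
    (h : rowSum n z i = 1) : ∃ j, z (i, j) = 1 := by
  obtain ⟨j, -, hj⟩ := Finset.exists_ne_zero_of_sum_ne_zero (h ▸ one_ne_zero : rowSum n z i ≠ 0)
  exact ⟨j, by have := hz (i, j); omega⟩

lemma eq_of_rowSum_le_one {z : Fin d × Fin n → ℕ} {i : Fin d} (h : rowSum n z i ≤ 1)
    {j j' : Fin n} (hj : z (i, j) = 1) (hj' : z (i, j') = 1) : j = j' := by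
  by_contra hne
  have := Finset.sum_le_sum_of_subset (f := fun j => z (i, j)) (Finset.subset_univ {j, j'})
  rw [Finset.sum_pair hne] at this
  simp only [hj, hj'] at this
  exact absurd (this.trans h) (by norm_num)

lemma update_mem_rowLift {z : Fin d × Fin n → ℕ} (hz : z ∈ rowLift n S) {i : Fin d} {j : Fin n}
    (hij : z (i, j) = 0) (hS : update (rowSum n z) i (rowSum n z i + 1) ∈ S) :
    update z (i, j) 1 ∈ rowLift n S := by
  refine ⟨fun p => ?_, by rwa [rowSum_update_of_eq_zero hij]⟩
  rcases eq_or_ne p (i, j) with rfl | hp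
  · simp
  · simpa [hp] using hz.1 p

lemma rowLift_inter (S₁ S₂ : Set (Fin d → ℕ)) :
    rowLift n S₁ ∩ rowLift n S₂ = rowLift n (S₁ ∩ S₂) := by
  ext z
  simp only [rowLift, mem_inter_iff, mem_ofPred_eq]
  tauto

lemma IsMatroid.rowLift (hM : IsMatroid S) : IsMatroid (rowLift n S) := by
  obtain ⟨h01, h0, hdown, hexch⟩ := hM
  refine ⟨fun z hz => hz.1, ⟨fun _ => zero_le_one, by convert h0; simp [rowSum]⟩, ?_, ?_⟩
  · rintro x ⟨hx1, hxS⟩ y hy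
    exact ⟨fun p => (hy p).trans (hx1 p), hdown _ hxS _ (rowSum_mono hy)⟩
  · rintro x hx z hz hlt
    rw [← sum_rowSum, ← sum_rowSum] at hlt
    obtain ⟨i, hxi, hzi, hupd⟩ := hexch _ hx.2 _ hz.2 hlt
    obtain ⟨j, hj⟩ := exists_eq_one_of_rowSum_eq_one hx.1 hxi
    have hzj : z (i, j) = 0 := by have := le_rowSum z i j; omega
    exact ⟨(i, j), hj, hzj, update_mem_rowLift hz hzj (by rwa [hzi])⟩

lemma isBaseV_rowLift_iff (hn : 0 < n) (hM : IsMatroid S) {z : Fin d × Fin n → ℕ} :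
    IsBaseV (rowLift n S) z ↔ z ∈ rowLift n S ∧ IsBaseV S (rowSum n z) := by
  refine ⟨fun hz => ⟨hz.1, hz.1.2, fun v hv hle => ?_⟩, fun ⟨hz, hzB⟩ => ⟨hz, fun w hw hle => ?_⟩⟩
  · by_contra hne
    obtain ⟨i, hi⟩ : ∃ i, rowSum n z i < v i := by
      by_contra! h
      exact hne (funext fun i => le_antisymm (h i) (hle i))
    have hvi := hM.1 v hv i
    have hz0 : z (i, ⟨0, hn⟩) = 0 := by have := le_rowSum z i ⟨0, hn⟩; omega
    have hup := update_mem_rowLift hz.1 hz0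
      (hM.2.2.1 v hv _ (update_le_iff.2 ⟨by omega, fun k _ => hle k⟩))
    have := congrFun (hz.2 _ hup (le_update_iff.2 ⟨by omega, fun _ _ => le_rfl⟩)) (i, ⟨0, hn⟩)
    simp [hz0] at this
  · have hrow := hzB.2 _ hw.2 (rowSum_mono hle)
    have hsum : ∑ p, z p = ∑ p, w p := by rw [← sum_rowSum, ← sum_rowSum, hrow]
    exact funext fun p => ((Finset.sum_eq_sum_iff_of_le fun p _ => hle p).1 hsum p
      (Finset.mem_univ p)).symm

lemma exists_setOf_eq_one_eq_image (hn : 0 < n) {z : Fin d × Fin n → ℕ}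
    (hz : ∀ i, rowSum n z i ≤ 1) :
    ∃ c : Fin d → Fin n, {p | z p = 1} = (fun i => (i, c i)) '' {i | rowSum n z i = 1} := by
  have hz1 : ∀ p, z p ≤ 1 := fun p => (le_rowSum z p.1 p.2).trans (hz p.1)
  have : ∀ i, ∃ j, rowSum n z i = 1 → z (i, j) = 1 := fun i => by
    by_cases h : rowSum n z i = 1
    · exact (exists_eq_one_of_rowSum_eq_one hz1 h).imp fun _ hj _ => hj
    · exact ⟨⟨0, hn⟩, fun h' => absurd h' h⟩
  choose c hc using this
  refine ⟨c, ext fun ⟨i, j⟩ => ⟨fun h => ?_, ?_⟩⟩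
  · have h : z (i, j) = 1 := h
    have hi : rowSum n z i = 1 := by have := le_rowSum z i j; have := hz i; omega
    exact ⟨i, hi, Prod.ext rfl (eq_of_rowSum_le_one (hz i) (hc i hi) h)⟩
  · rintro ⟨i, hi, h⟩
    cases h
    exact hc i hi

lemma rowSum_indFun_image_union {A C : Set (Fin d)} (h : Disjoint A C) (a c : Fin d → Fin n) :
    rowSum n (indFun ((fun i => (i, a i)) '' A ∪ (fun i => (i, c i)) '' C)) = indFun (A ∪ C) := by
  classical
  funext i
  by_cases hA : i ∈ A
  · have hC : i ∉ C := disjoint_left.1 h hA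
    simp [rowSum, indFun, Set.indicator_apply, hA, hC]
  · by_cases hC : i ∈ C <;> simp [rowSum, indFun, Set.indicator_apply, hA, hC]

lemma isBaseV_rowLift_indFun_image_union (hn : 0 < n) (hM : IsMatroid S) {A C : Set (Fin d)}
    (h : Disjoint A C) (a c : Fin d → Fin n) (hB : IsBaseV S (indFun (A ∪ C))) :
    IsBaseV (rowLift n S) (indFun ((fun i => (i, a i)) '' A ∪ (fun i => (i, c i)) '' C)) := by
  rw [isBaseV_rowLift_iff hn hM, rowSum_indFun_image_union h]
  refine ⟨⟨fun p => ?_, by rw [rowSum_indFun_image_union h]; exact hB.1⟩, hB⟩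
  classical
  simp only [indFun, Set.indicator_apply]
  split_ifs <;> simp

lemma IsSBO.rowLift (hn : 0 < n) (hM : IsMatroid S) (hS : IsSBO S) : IsSBO (rowLift n S) := by
  intro z w hz hw
  obtain ⟨hzL, hzB⟩ := (isBaseV_rowLift_iff hn hM).1 hz
  obtain ⟨hwL, hwB⟩ := (isBaseV_rowLift_iff hn hM).1 hw
  obtain ⟨cz, hcz⟩ := exists_setOf_eq_one_eq_image hn (hM.1 _ hzL.2)
  obtain ⟨cw, hcw⟩ := exists_setOf_eq_one_eq_image hn (hM.1 _ hwL.2)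
  obtain ⟨π, hπ, hexch⟩ := hS _ _ hzB hwB
  have graph_injective : ∀ c : Fin d → Fin n, Injective fun i => (i, c i) :=
    fun c _ _ h => congrArg Prod.fst h
  refine ⟨fun p => (π p.1, cw (π p.1)), ?_, fun I hI => ?_⟩
  · rw [hcz, hcw]
    have hfst : BijOn Prod.fst ((fun i => (i, cz i)) '' {i | rowSum n z i = 1})
        {i | rowSum n z i = 1} :=
      (graph_injective cz).injOn.bijOn_image.symm ⟨by rintro _ ⟨i, -, rfl⟩; rfl, fun _ _ => rfl⟩
    exact ((graph_injective cw).injOn.bijOn_image.comp hπ).comp hfst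
  · rw [hcz] at hI
    obtain ⟨I₀, hI₀, rfl⟩ := subset_image_iff.1 hI
    have hB := hexch I₀ hI₀
    rw [hcz, ← image_sdiff (graph_injective cz), image_image, ← image_image (fun i => (i, cw i))]
    exact isBaseV_rowLift_indFun_image_union hn hM
      (hM.disjoint_image_sdiff hzB (hπ.injOn.mono hI₀) hI₀ hB) _ _ hB

end RowLift

lemma mem_sBracket_iff {d n : ℕ} {S : Set (Fin d → ℕ)} (h01 : ∀ v ∈ S, ∀ i, v i ≤ 1)
    (x : Fin d → Fin n → ℕ) : x ∈ SBracket n S ↔ uncurry x ∈ NUnion n (rowLift n S) := by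
  classical
  constructor
  · rintro ⟨y, hy, hxy⟩
    choose σ hσ using hxy
    refine ⟨fun k p => if σ p.1 p.2 = k then y p.1 k else 0, fun k => ⟨fun p => ?_, ?_⟩,
      fun k l hkl p => ?_, fun p => ?_⟩
    · dsimp only
      split_ifs
      exacts [h01 _ (hy k) _, zero_le_one]
    · convert hy k using 1
      funext i
      exact (Fintype.sum_equiv (σ i) _ (fun m => if m = k then y i k else 0) fun _ => rfl).trans
        (by simp)
    · by_cases h : σ p.1 p.2 = k
      · exact Or.inr (if_neg (h ▸ hkl))
      · exact Or.inl (if_neg h)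
    · simpa [uncurry] using hσ p.1 p.2
  · rintro ⟨f, hf, hdisj, hx⟩
    replace hx : ∀ i j, x i j = ∑ k, f k (i, j) := fun i j => hx (i, j)
    refine ⟨fun i k => rowSum n (f k) i, fun k => (hf k).2, fun i => exists_perm_of_sum_eq
      (fun j => ?_) (fun k => h01 _ (hf k).2 i) ?_⟩
    · rw [hx]
      by_cases h : ∀ k, f k (i, j) = 0
      · simp [h]
      · obtain ⟨k, hk⟩ := not_forall.1 h
        rw [Finset.sum_eq_single k (fun l _ hl => (hdisj l k hl _).resolve_right hk) (by simp)]
        exact (hf k).1 _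
    · simp only [rowSum, hx]
      exact Finset.sum_comm

/-- For strongly base orderable matroids `S₁, S₂`, `[S₁ⁿ] ∩ [S₂ⁿ] = [(S₁ ∩ S₂)ⁿ]`.
The Davies–McDiarmid theorem (on the ground set `[d] × [n]`) is assumed as the
hypothesis `hDM`. -/
theorem stmt12 (d n : ℕ) (hn : 0 < n) (S₁ S₂ : Set (Fin d → ℕ))
    (hM₁ : IsMatroid S₁) (hM₂ : IsMatroid S₂)
    (hSBO₁ : IsSBO S₁) (hSBO₂ : IsSBO S₂)
    (hDM : ∀ T₁ T₂ : Set (Fin d × Fin n → ℕ),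
      IsMatroid T₁ → IsMatroid T₂ → IsSBO T₁ → IsSBO T₂ →
      NUnion n T₁ ∩ NUnion n T₂ = NUnion n (T₁ ∩ T₂)) :
    SBracket n S₁ ∩ SBracket n S₂ = SBracket n (S₁ ∩ S₂) := by
  have h01 : ∀ v ∈ S₁ ∩ S₂, ∀ i, v i ≤ 1 := fun v hv => hM₁.1 v hv.1
  have hlift := hDM _ _ hM₁.rowLift hM₂.rowLift (hSBO₁.rowLift hn hM₁) (hSBO₂.rowLift hn hM₂)
  ext x
  rw [mem_inter_iff, mem_sBracket_iff hM₁.1, mem_sBracket_iff hM₂.1, mem_sBracket_iff h01,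
    ← rowLift_inter, ← hlift, mem_inter_iff]
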